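/- arXiv:1710.11124 — 3 statements merged into one kernel-verified Lean document; each statement's English description precedes it below -/
import Mathlib

section
/- Let $\alpha > 0$ and $s$ a positive integer. Define the polytope $\tau(\alpha,s) = \{x \in \mathbb{R}^d : \|x\|_\infty \leq \alpha, \|x\|_1 \leq s\alpha\}$ and, for $x \in \mathbb{R}^d$, the set $\mathcal{U}(\alpha,s,x) = \{u \in \mathbb{R}^d : \mathrm{supp}(u) \subseteq \mathrm{supp}(x), \|u\|_0 \leq s, \|u\|_1 = \|x\|_1, \|u\|_\infty \leq \alpha\}$. Then every $x \in \tau(\alpha,s)$ can be written as a finite convex combination $x = \sum_i \lambda_i u_i$ with $u_i \in \mathcal{U}(\alpha,s,x)$, $\lambda_i \in [0,1]$, $\sum_i \lambda_i = 1$, and moreover $\sum_i \lambda_i \|u_i\|_2^2 \leq s\alpha^2$. -/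
/-!
Induct on the number of coordinates of `x` that are nonzero but strictly below `α` in absolute
value. If there is at most one of them, the `ℓ¹` bound forces `x` itself to have at most `s`
nonzero coordinates. Otherwise pick two of them, `i` and `j`: moving `ℓ¹`-mass between them along
the sign-preserving direction keeps the support, the `ℓ¹` norm and the `ℓ∞` bound, and pushing it
as far as possible in either direction gives points `y`, `z` with fewer such coordinates and `x`
on the segment `[y, z]`. Finally every `u ∈ 𝒰(α, s, x)` has `‖u‖₂² ≤ α ‖u‖₁ = α ‖x‖₁ ≤ s α²`.
-/
open Finset

section convexHull

variable {E : Type*} [AddCommGroup E] [Module ℝ E]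

theorem mem_convexHull_of_add_smul_of_sub_smul {S : Set E} {x v : E} {a b : ℝ}
    (ha : 0 < a) (hb : 0 < b) (h₁ : x + a • v ∈ convexHull ℝ S)
    (h₂ : x - b • v ∈ convexHull ℝ S) : x ∈ convexHull ℝ S := by
  have hab : 0 < a + b := add_pos ha hb
  convert convex_convexHull ℝ S h₁ h₂ (div_nonneg hb.le hab.le) (div_nonneg ha.le hab.le)
    (by rw [← add_div, add_comm, div_self hab.ne']) using 1
  match_scalars <;> field_simp <;> ring

theorem exists_fin_of_mem_convexHull {S : Set E} {x : E} (hx : x ∈ convexHull ℝ S) :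
    ∃ (K : ℕ) (w : Fin K → ℝ) (z : Fin K → E),
      (∀ i, 0 ≤ w i) ∧ ∑ i, w i = 1 ∧ (∀ i, z i ∈ S) ∧ ∑ i, w i • z i = x := by
  obtain ⟨ι, _, w, z, hw₀, hw₁, hz, hx⟩ := mem_convexHull_iff_exists_fintype.mp hx
  let e := Fintype.equivFin ι
  refine ⟨Fintype.card ι, w ∘ e.symm, z ∘ e.symm, fun i => hw₀ _, ?_, fun i => hz _, ?_⟩
  · rw [← hw₁]; exact e.symm.sum_comp w
  · rw [← hx]; exact e.symm.sum_comp fun i => w i • z i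

end convexHull

theorem abs_add_mul_sign {a : ℝ} (ha : a ≠ 0) {c : ℝ} (hc : 0 ≤ |a| + c) :
    |a + c * SignType.sign a| = |a| + c := by
  have : a + c * SignType.sign a = SignType.sign a * (|a| + c) := by
    rw [mul_add, sign_mul_abs]; ring
  rw [this, abs_mul, abs_of_nonneg hc]
  rcases ha.lt_or_gt with h | h <;> simp [h]

variable {ι : Type*}

noncomputable def unsaturatedSupport [Fintype ι] (α : ℝ) (x : ι → ℝ) : Finset ι :=
  {j | x j ≠ 0 ∧ |x j| < α}

/-- The set `𝒰(α, s, x)`. -/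
noncomputable def sparseReps [Fintype ι] (α : ℝ) (s : ℕ) (x : ι → ℝ) : Set (ι → ℝ) :=
  {u | (∀ j, u j ≠ 0 → x j ≠ 0) ∧ #{j | u j ≠ 0} ≤ s ∧ ∑ j, |u j| = ∑ j, |x j| ∧
    ∀ j, |u j| ≤ α}

section sparseReps

variable [Fintype ι] {α : ℝ} {s : ℕ}

theorem self_mem_sparseReps {x : ι → ℝ} (hx : ∀ j, |x j| ≤ α) (hs : #{j | x j ≠ 0} ≤ s) :
    x ∈ sparseReps α s x :=
  ⟨fun _ => id, hs, rfl, hx⟩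

theorem sparseReps_mono {x y : ι → ℝ} (hsupp : ∀ j, y j ≠ 0 → x j ≠ 0)
    (hsum : ∑ j, |y j| = ∑ j, |x j|) : sparseReps α s y ⊆ sparseReps α s x :=
  fun _ ⟨hu, hcard, hnorm, hbound⟩ =>
    ⟨fun j h => hsupp j (hu j h), hcard, hnorm.trans hsum, hbound⟩

theorem sum_sq_le_of_mem_sparseReps {x u : ι → ℝ} (hu : u ∈ sparseReps α s x)
    (hx : ∑ j, |x j| ≤ s * α) : ∑ j, u j ^ 2 ≤ s * α ^ 2 := by
  obtain ⟨-, -, hnorm, hbound⟩ := hu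
  calc ∑ j, u j ^ 2 ≤ ∑ j, α * |u j| := by
        gcongr with j
        rw [← sq_abs, sq]
        exact mul_le_mul_of_nonneg_right (hbound j) (abs_nonneg _)
    _ = α * ∑ j, |x j| := by rw [← mul_sum, hnorm]
    _ ≤ s * α ^ 2 := by
        rcases le_or_gt 0 α with hα | hα
        · nlinarith
        · nlinarith [sum_nonneg fun j (_ : j ∈ univ) => abs_nonneg (x j)]

/-- Every coordinate of the support outside `unsaturatedSupport α x` carries mass exactly `α`. -/
theorem card_support_le_of_card_unsaturatedSupport_le_one {x : ι → ℝ} (hx : ∀ j, |x j| ≤ α)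
    (hsum : ∑ j, |x j| ≤ s * α) (hfree : #(unsaturatedSupport α x) ≤ 1) : #{j | x j ≠ 0} ≤ s := by
  classical
  set S : Finset ι := {j | x j ≠ 0}
  set F := unsaturatedSupport α x
  have hFS : F ⊆ S := fun j hj => by simp_all [F, S, unsaturatedSupport]
  have hsat : ∀ j ∈ S \ F, |x j| = α := fun j hj => by
    simp only [S, F, unsaturatedSupport, mem_sdiff, mem_filter, mem_univ, true_and, not_and,
      not_lt] at hj
    exact (hx j).antisymm (hj.2 hj.1)
  have hmass : #(S \ F) * α + ∑ j ∈ F, |x j| ≤ s * α := calc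
    _ = ∑ j ∈ S, |x j| := by rw [← sum_sdiff hFS, sum_congr rfl hsat, sum_const, nsmul_eq_mul]
    _ ≤ ∑ j, |x j| := sum_le_sum_of_subset_of_nonneg (subset_univ S) fun j _ _ => abs_nonneg _
    _ ≤ s * α := hsum
  have hcard := card_sdiff_add_card_eq_card hFS
  rcases S.eq_empty_or_nonempty with hS | ⟨j₀, hj₀⟩
  · simp [hS]
  have hα : 0 < α := (abs_pos.mpr (mem_filter.mp hj₀).2).trans_le (hx j₀)
  rcases Nat.le_one_iff_eq_zero_or_eq_one.mp hfree with hF | hF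
  · rw [card_eq_zero.mp hF] at hmass hcard
    rw [sum_empty, add_zero] at hmass
    have := le_of_mul_le_mul_right hmass hα
    norm_cast at this
    simp only [card_empty, add_zero] at hcard
    omega
  · obtain ⟨f, hf⟩ := card_eq_one.mp hF
    have hfF : f ∈ F := hf ▸ mem_singleton_self f
    have hf_pos : 0 < |x f| := abs_pos.mpr (mem_filter.mp hfF).2.1
    rw [hf, sum_singleton] at hmass
    rw [hf, card_singleton] at hcard
    have := lt_of_mul_lt_mul_right (hmass.trans_lt' (lt_add_of_pos_right _ hf_pos)) hα.le
    norm_cast at this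
    omega

end sparseReps

section transfer

variable [DecidableEq ι]

/-- Direction that moves `ℓ¹`-mass from coordinate `i` to coordinate `j` of `x`, keeping signs. -/
noncomputable def transfer (x : ι → ℝ) (i j : ι) : ι → ℝ :=
  Pi.single j (SignType.sign (x j) : ℝ) - Pi.single i (SignType.sign (x i) : ℝ)

theorem transfer_swap (x : ι → ℝ) (i j : ι) : transfer x j i = -transfer x i j :=
  (neg_sub _ _).symm

variable {x : ι → ℝ} {i j : ι} {m : ℝ}

theorem add_smul_transfer_apply_left (hij : i ≠ j) :
    (x + m • transfer x i j) i = x i + -m * SignType.sign (x i) := by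
  simp [transfer, hij]

theorem add_smul_transfer_apply_right (hij : i ≠ j) :
    (x + m • transfer x i j) j = x j + m * SignType.sign (x j) := by
  simp [transfer, hij.symm]

theorem add_smul_transfer_apply_eq_or (x : ι → ℝ) (i j : ι) (m : ℝ) (k : ι) :
    k = i ∨ k = j ∨ (x + m • transfer x i j) k = x k := by
  by_cases hki : k = i
  · exact .inl hki
  by_cases hkj : k = j
  · exact .inr (.inl hkj)
  · exact .inr (.inr (by simp [transfer, hki, hkj]))

theorem abs_add_smul_transfer_apply_left (hij : i ≠ j) (hi : x i ≠ 0) (hmi : m ≤ |x i|) :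
    |(x + m • transfer x i j) i| = |x i| - m := by
  rw [add_smul_transfer_apply_left hij, abs_add_mul_sign hi (by linarith), sub_eq_add_neg]

theorem abs_add_smul_transfer_apply_right (hij : i ≠ j) (hj : x j ≠ 0) (hm : 0 ≤ m) :
    |(x + m • transfer x i j) j| = |x j| + m := by
  rw [add_smul_transfer_apply_right hij, abs_add_mul_sign hj (by positivity)]

theorem sum_abs_add_smul_transfer [Fintype ι] (hij : i ≠ j) (hi : x i ≠ 0) (hj : x j ≠ 0)
    (hm : 0 ≤ m) (hmi : m ≤ |x i|) : ∑ k, |(x + m • transfer x i j) k| = ∑ k, |x k| := by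
  rw [← sub_eq_zero, ← sum_sub_distrib, Fintype.sum_eq_add i j hij,
    abs_add_smul_transfer_apply_left hij hi hmi, abs_add_smul_transfer_apply_right hij hj hm]
  · ring
  · rintro k ⟨hki, hkj⟩
    rw [(add_smul_transfer_apply_eq_or x i j m k).resolve_left hki |>.resolve_left hkj, sub_self]

/-- Moving as much mass from `i` to `j` as possible either empties `i` or saturates `j`, so the
unsaturated support shrinks. -/
theorem exists_transfer_step [Fintype ι] {α : ℝ} {s : ℕ} (hx : ∀ k, |x k| ≤ α) (hij : i ≠ j)
    (hi : i ∈ unsaturatedSupport α x) (hj : j ∈ unsaturatedSupport α x) :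
    ∃ m : ℝ, 0 < m ∧ (∀ k, |(x + m • transfer x i j) k| ≤ α) ∧
      ∑ k, |(x + m • transfer x i j) k| = ∑ k, |x k| ∧
      sparseReps α s (x + m • transfer x i j) ⊆ sparseReps α s x ∧
      #(unsaturatedSupport α (x + m • transfer x i j)) < #(unsaturatedSupport α x) := by
  simp only [unsaturatedSupport, mem_filter, mem_univ, true_and] at hi hj
  set m := min |x i| (α - |x j|)
  set y := x + m • transfer x i j
  have hm : 0 < m := lt_min (abs_pos.mpr hi.1) (by linarith [hj.2])
  have hyi : |y i| = |x i| - m := abs_add_smul_transfer_apply_left hij hi.1 (min_le_left _ _)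
  have hyj : |y j| = |x j| + m := abs_add_smul_transfer_apply_right hij hj.1 hm.le
  have hsum := sum_abs_add_smul_transfer hij hi.1 hj.1 hm.le (min_le_left _ _)
  have hsupp : ∀ k, y k ≠ 0 → x k ≠ 0 := fun k hk => by
    rcases add_smul_transfer_apply_eq_or x i j m k with rfl | rfl | h
    exacts [hi.1, hj.1, h ▸ hk]
  refine ⟨m, hm, fun k => ?_, hsum, sparseReps_mono hsupp hsum, card_lt_card ?_⟩
  · rcases add_smul_transfer_apply_eq_or x i j m k with hk | hk | h
    · rw [hk, hyi]; linarith [hx i]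
    · rw [hk, hyj]; linarith [min_le_right |x i| (α - |x j|)]
    · exact h ▸ hx k
  have hsub : unsaturatedSupport α y ⊆ unsaturatedSupport α x := fun k hk => by
    simp only [unsaturatedSupport, mem_filter, mem_univ, true_and] at hk ⊢
    rcases add_smul_transfer_apply_eq_or x i j m k with rfl | rfl | h
    exacts [hi, hj, h ▸ hk]
  refine (ssubset_iff_of_subset hsub).mpr ?_
  obtain hmin | hmin : m = |x i| ∨ m = α - |x j| := min_choice _ _
  · refine ⟨i, by simpa [unsaturatedSupport] using hi, fun hiy => ?_⟩
    simp only [unsaturatedSupport, mem_filter, mem_univ, true_and] at hiy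
    exact hiy.1 (abs_eq_zero.mp (by rw [hyi, hmin, sub_self]))
  · refine ⟨j, by simpa [unsaturatedSupport] using hj, fun hjy => ?_⟩
    simp only [unsaturatedSupport, mem_filter, mem_univ, true_and] at hjy
    linarith [hjy.2, hyj, hmin]

end transfer

theorem mem_convexHull_sparseReps [Fintype ι] {α : ℝ} {s : ℕ} {x : ι → ℝ}
    (hx : ∀ j, |x j| ≤ α) (hsum : ∑ j, |x j| ≤ s * α) :
    x ∈ convexHull ℝ (sparseReps α s x) := by
  classical
  induction hn : #(unsaturatedSupport α x) using Nat.strong_induction_on generalizing x with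
  | _ n ih =>
  subst hn
  by_cases hfree : #(unsaturatedSupport α x) ≤ 1
  · exact subset_convexHull ℝ _
      (self_mem_sparseReps hx (card_support_le_of_card_unsaturatedSupport_le_one hx hsum hfree))
  obtain ⟨i, hi, j, hj, hij⟩ := one_lt_card.mp (not_le.mp hfree)
  obtain ⟨a, ha, hya, hsuma, hsuba, hfreea⟩ := exists_transfer_step (s := s) hx hij hi hj
  obtain ⟨b, hb, hyb, hsumb, hsubb, hfreeb⟩ := exists_transfer_step (s := s) hx hij.symm hj hi
  have hz := convexHull_mono hsubb (ih _ hfreeb hyb (hsumb ▸ hsum) rfl)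
  rw [transfer_swap, smul_neg, ← sub_eq_add_neg] at hz
  exact mem_convexHull_of_add_smul_of_sub_smul ha hb
    (convexHull_mono hsuba (ih _ hfreea hya (hsuma ▸ hsum) rfl)) hz

theorem sparse_representation_of_polytope_general (d s : ℕ) (α : ℝ)
    (x : Fin d → ℝ)
    (hx_inf : ∀ j, |x j| ≤ α)
    (hx_one : ∑ j, |x j| ≤ s * α) :
    ∃ (K : ℕ) (lam : Fin K → ℝ) (u : Fin K → Fin d → ℝ),
      (∀ i, 0 ≤ lam i ∧ lam i ≤ 1) ∧
      (∑ i, lam i = 1) ∧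
      (∀ i, (∀ j, u i j ≠ 0 → x j ≠ 0) ∧
            ((univ.filter fun j => u i j ≠ 0).card ≤ s) ∧
            (∑ j, |u i j| = ∑ j, |x j|) ∧
            (∀ j, |u i j| ≤ α)) ∧
      (x = ∑ i, lam i • u i) ∧
      (∑ i, lam i * ∑ j, (u i j) ^ 2 ≤ s * α ^ 2) := by
  obtain ⟨K, lam, u, hlam, hlam_sum, hu, hx⟩ :=
    exists_fin_of_mem_convexHull (mem_convexHull_sparseReps hx_inf hx_one)
  refine ⟨K, lam, u, fun i => ⟨hlam i, ?_⟩, hlam_sum, hu, hx.symm, ?_⟩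
  · exact hlam_sum ▸ single_le_sum (fun i _ => hlam i) (mem_univ i)
  calc ∑ i, lam i * ∑ j, u i j ^ 2 ≤ ∑ i, lam i * (s * α ^ 2) := by
        gcongr with i
        exacts [hlam i, sum_sq_le_of_mem_sparseReps (hu i) hx_one]
    _ = s * α ^ 2 := by rw [← sum_mul, hlam_sum, one_mul]

/-- Cai–Zhang sparse representation of points in a polytope (Lemma 2.2). -/
theorem sparse_representation_of_polytope (d s : ℕ) (hs : 0 < s) (α : ℝ) (hα : 0 < α)
    (x : Fin d → ℝ)
    (hx_inf : ∀ j, |x j| ≤ α)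
    (hx_one : ∑ j, |x j| ≤ s * α) :
    ∃ (K : ℕ) (lam : Fin K → ℝ) (u : Fin K → Fin d → ℝ),
      (∀ i, 0 ≤ lam i ∧ lam i ≤ 1) ∧
      (∑ i, lam i = 1) ∧
      (∀ i, (∀ j, u i j ≠ 0 → x j ≠ 0) ∧
            ((univ.filter fun j => u i j ≠ 0).card ≤ s) ∧
            (∑ j, |u i j| = ∑ j, |x j|) ∧
            (∀ j, |u i j| ≤ α)) ∧
      (x = ∑ i, lam i • u i) ∧
      (∑ i, lam i * ∑ j, (u i j) ^ 2 ≤ s * α ^ 2) :=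
  sparse_representation_of_polytope_general d s α x hx_inf hx_one
end

section
/- Let $h \in \mathbb{R}^d$ and let $T_0 \subseteq \{1,\dots,d\}$ with $|T_0| = s$ be the set of indices of the $s$ largest-magnitude entries of $h$. Suppose $\|h_{T_0^c}\|_1 \leq \|h_{T_0}\|_1 + 2c$ for some $c \geq 0$. Then $\|h_{T_0^c}\|_2 \leq \sqrt{\|h_{T_0}\|_2^2 + \frac{2 c \|h_{T_0}\|_2}{\sqrt{s}}}$. -/
/-!
Every tail entry is at most the average `A / s` of the `s` largest magnitudes, where
`A = ‖h_{T₀}‖₁`, so `‖h_{T₀ᶜ}‖₂² ≤ (A / s) ‖h_{T₀ᶜ}‖₁ ≤ (A / s)(A + 2c)`. Writing `Q = ‖h_{T₀}‖₂²`,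
`u = √(Q / s)` and `v = A / s`, Cauchy–Schwarz gives `v ≤ u`, and the remaining gap factors as
`Q + 2cu - v(A + 2c) = (u - v)(s(u + v) + 2c)`, where `s(u + v) + 2c ≥ A + 2c ≥ 0`.
-/

open Finset

theorem sum_sq_le_mul_sum_abs {ι : Type*} (S : Finset ι) (f : ι → ℝ) {M : ℝ}
    (hM : ∀ j ∈ S, |f j| ≤ M) : ∑ j ∈ S, f j ^ 2 ≤ M * ∑ j ∈ S, |f j| := by
  rw [mul_sum]
  refine sum_le_sum fun j hj => ?_
  rw [← sq_abs, sq]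
  exact mul_le_mul_of_nonneg_right (hM j hj) (abs_nonneg _)

theorem div_mul_add_le_of_sq_le_mul {A Q s c : ℝ} (hs : 0 < s) (hA : 0 ≤ A)
    (hAQ : A ^ 2 ≤ s * Q) (hAc : 0 ≤ A + 2 * c) :
    A / s * (A + 2 * c) ≤ Q + 2 * c * √Q / √s := by
  have hQ : 0 ≤ Q := nonneg_of_mul_nonneg_right (by nlinarith) hs
  set u := √Q / √s with hu
  set v := A / s with hv
  have hQu : Q = s * u ^ 2 := by
    rw [hu, div_pow, Real.sq_sqrt hQ, Real.sq_sqrt hs.le]; field_simp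
  have hAv : A = s * v := by rw [hv]; field_simp
  have hu0 : 0 ≤ u := by positivity
  have hvu : v ≤ u := by
    refine (pow_le_pow_iff_left₀ (by positivity) hu0 two_ne_zero).1 ?_
    refine le_of_mul_le_mul_left ?_ (pow_pos hs 2)
    nlinarith
  have hgap : Q + 2 * c * u - v * (A + 2 * c) = (u - v) * (s * (u + v) + 2 * c) := by
    rw [hQu, hAv]; ring
  have hgap_nonneg : 0 ≤ (u - v) * (s * (u + v) + 2 * c) :=
    mul_nonneg (sub_nonneg.2 hvu) (by nlinarith)
  rw [mul_div_assoc]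
  linarith

theorem tail_l2_bound_general {d : ℕ} (h : Fin d → ℝ) (s : ℕ) (hs : 0 < s)
    (T0 : Finset (Fin d)) (hT0card : T0.card = s)
    (hT0max : ∀ i ∈ T0, ∀ j ∈ T0ᶜ, |h j| ≤ |h i|)
    (c : ℝ)
    (hcone : ∑ j ∈ T0ᶜ, |h j| ≤ ∑ j ∈ T0, |h j| + 2 * c) :
    Real.sqrt (∑ j ∈ T0ᶜ, h j ^ 2) ≤
      Real.sqrt ((∑ j ∈ T0, h j ^ 2) +
        2 * c * Real.sqrt (∑ j ∈ T0, h j ^ 2) / Real.sqrt s) := by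
  set A := ∑ j ∈ T0, |h j|
  have hs' : (0 : ℝ) < s := Nat.cast_pos.2 hs
  have htail_le_avg : ∀ j ∈ T0ᶜ, |h j| ≤ A / s := fun j hj => by
    rw [le_div_iff₀ hs', mul_comm, ← nsmul_eq_mul, ← hT0card]
    exact card_nsmul_le_sum _ _ _ fun i hi => hT0max i hi j hj
  have hCS : A ^ 2 ≤ s * ∑ j ∈ T0, h j ^ 2 := by
    simpa [hT0card, sq_abs] using sq_sum_le_card_mul_sum_sq (s := T0) (f := fun j => |h j|)
  have hA : 0 ≤ A := sum_nonneg fun _ _ => abs_nonneg _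
  have hAc : 0 ≤ A + 2 * c := (sum_nonneg fun _ _ => abs_nonneg _).trans hcone
  refine Real.sqrt_le_sqrt ?_
  calc ∑ j ∈ T0ᶜ, h j ^ 2 ≤ A / s * ∑ j ∈ T0ᶜ, |h j| := sum_sq_le_mul_sum_abs _ _ htail_le_avg
    _ ≤ A / s * (A + 2 * c) := by gcongr
    _ ≤ _ := div_mul_add_le_of_sq_le_mul hs' hA hCS hAc

/-- Inequality (31): bound for the tail `‖h_{T₀ᶜ}‖₂`. -/
theorem tail_l2_bound {d : ℕ} (h : Fin d → ℝ) (s : ℕ) (hs : 0 < s)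
    (T0 : Finset (Fin d)) (hT0card : T0.card = s)
    (hT0max : ∀ i ∈ T0, ∀ j ∈ T0ᶜ, |h j| ≤ |h i|)
    (c : ℝ) (hc : 0 ≤ c)
    (hcone : ∑ j ∈ T0ᶜ, |h j| ≤ ∑ j ∈ T0, |h j| + 2 * c) :
    Real.sqrt (∑ j ∈ T0ᶜ, h j ^ 2) ≤
      Real.sqrt ((∑ j ∈ T0, h j ^ 2) +
        2 * c * Real.sqrt (∑ j ∈ T0, h j ^ 2) / Real.sqrt s) :=
  tail_l2_bound_general h s hs T0 hT0card hT0max c hcone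
end

section
/- Let $h \in \mathbb{R}^d$, let $T_0$ be the index set of the $s$ largest-magnitude entries of $D^*h$ for a tight frame $D$, and suppose $\|D^*_{T_0^c} h\|_1 \leq sr$ and $\|D^*_{T_0^c}h\|_\infty \leq \frac{s}{n} r$ for some $r \geq 0$ and positive integer $n \leq s$. Then there exist finitely many $n$-sparse vectors $u_i \in \mathbb{R}^d$ with supports contained in $T_0^c$ and weights $\lambda_i \in (0,1]$, $\sum_i \lambda_i = 1$, such that $D^*_{T_0^c} h = \sum_i \lambda_i u_i$, $\|u_i\|_\infty \leq \frac{s}{n}r$ for each $i$, and $\sum_i \lambda_i \|u_i\|_2^2 \leq \frac{s^2 r^2}{n}$. -/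
/-!
Put `c = s r / n`. Up to the signs of `y` and the factor `c`, the vector `y` is the point
`|y| / c` of the polytope `{w ∈ [0,1]^d | ∑ w ≤ n}`. This polytope is compact and convex, and its
extreme points are `0/1` vectors: if two coordinates `w i`, `w j` are fractional, `w` can be moved
both ways along `e i - e j`; if only `w i` is, the other coordinates add up to an integer `< n`,
which leaves room to move `w` along `e i`. By Krein–Milman, `|y| / c` is therefore a convex
combination of indicator vectors of sets of at most `n` indices. Multiplying back by
`c • sign y` turns these into `n`-sparse vectors `u i` supported in the support of `y`, with
`|u i j| ≤ c`, hence `‖u i‖₂² ≤ n c² = s² r² / n`.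
-/

open Matrix Finset

section Convex

variable {𝕜 E : Type*} [Field 𝕜] [LinearOrder 𝕜] [IsStrictOrderedRing 𝕜] [AddCommGroup E]
  [Module 𝕜 E]

theorem eq_zero_of_mem_extremePoints_of_add_mem_of_sub_mem {A : Set E} {x v : E}
    (hx : x ∈ A.extremePoints 𝕜) (hadd : x + v ∈ A) (hsub : x - v ∈ A) : v = 0 := by
  have hseg : x ∈ openSegment 𝕜 (x - v) (x + v) :=
    ⟨1 / 2, 1 / 2, by norm_num, by norm_num, by norm_num, by
      rw [smul_sub, smul_add, sub_add_add_cancel, ← add_smul]; norm_num⟩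
  simpa using hx.2 hsub hadd hseg

theorem exists_fin_pos_convex_combination_of_mem_convexHull {s : Set E} {x : E}
    (hx : x ∈ convexHull 𝕜 s) :
    ∃ (K : ℕ) (lam : Fin K → 𝕜) (u : Fin K → E),
      (∀ i, 0 < lam i) ∧ ∑ i, lam i = 1 ∧ (∀ i, u i ∈ s) ∧ x = ∑ i, lam i • u i := by
  obtain ⟨ι, _, z, w, hzs, -, hw, hsum, hx⟩ := eq_pos_convex_span_of_mem_convexHull hx
  let e := (Fintype.equivFin ι).symm
  refine ⟨Fintype.card ι, w ∘ e, z ∘ e, fun i => hw _, ?_, fun i => hzs ⟨_, rfl⟩, ?_⟩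
  · rw [← hsum]; exact e.sum_comp w
  · rw [← hx]; exact (e.sum_comp fun i => w i • z i).symm

end Convex

def cappedSimplex (ι : Type*) [Fintype ι] (n : ℕ) : Set (ι → ℝ) :=
  {w | w ∈ Set.Icc 0 1 ∧ ∑ i, w i ≤ n}

namespace cappedSimplex

variable {ι : Type*} [Fintype ι] {n : ℕ} {w v : ι → ℝ}

theorem apply_mem_Icc (hw : w ∈ cappedSimplex ι n) (k : ι) : w k ∈ Set.Icc 0 1 :=
  ⟨hw.1.1 k, hw.1.2 k⟩

theorem add_mem (hv : ∀ k, |v k| ≤ w k ∧ |v k| ≤ 1 - w k)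
    (hsum : |∑ k, v k| ≤ n - ∑ k, w k) : w + v ∈ cappedSimplex ι n := by
  refine ⟨⟨fun k => ?_, fun k => ?_⟩, ?_⟩
  · have := (hv k).1; have := neg_abs_le (v k); simp only [Pi.add_apply, Pi.zero_apply]; linarith
  · have := (hv k).2; have := le_abs_self (v k); simp only [Pi.add_apply, Pi.one_apply]; linarith
  · have := le_abs_self (∑ k, v k); simp only [Pi.add_apply, sum_add_distrib]; linarith

theorem eq_zero_of_mem_extremePoints (hw : w ∈ (cappedSimplex ι n).extremePoints ℝ)
    (hv : ∀ k, |v k| ≤ w k ∧ |v k| ≤ 1 - w k) (hsum : |∑ k, v k| ≤ n - ∑ k, w k) : v = 0 :=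
  eq_zero_of_mem_extremePoints_of_add_mem_of_sub_mem hw (add_mem hv hsum) <| by
    rw [sub_eq_add_neg]
    exact add_mem (by simpa using hv) (by simpa using hsum)

theorem apply_notMem_Ioo_of_mem_extremePoints [DecidableEq ι]
    (hw : w ∈ (cappedSimplex ι n).extremePoints ℝ) {i j : ι} (hij : i ≠ j)
    (hi : w i ∈ Set.Ioo 0 1) : w j ∉ Set.Ioo 0 1 := by
  intro hj
  set ε := min (min (w i) (1 - w i)) (min (w j) (1 - w j))
  have hε : 0 < ε := by
    simp only [ε, lt_min_iff, sub_pos]; exact ⟨hi, hj⟩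
  have hv := eq_zero_of_mem_extremePoints hw (v := Pi.single i ε - Pi.single j ε) (fun k => by
    rcases eq_or_ne k i with rfl | hki
    · simp [hij, abs_of_pos hε, ε]
    rcases eq_or_ne k j with rfl | hkj
    · simp [hki, abs_of_pos hε, ε]
    · simpa [hki, hkj] using apply_mem_Icc hw.1 k) (by
    simp [sum_sub_distrib, sub_nonneg, hw.1.2])
  simpa [hij, hε.ne'] using congrFun hv i

theorem apply_eq_zero_or_one_of_mem_extremePoints
    (hw : w ∈ (cappedSimplex ι n).extremePoints ℝ) (i : ι) : w i = 0 ∨ w i = 1 := by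
  classical
  by_contra hfrac
  have hi : w i ∈ Set.Ioo 0 1 := by
    push Not at hfrac
    exact ⟨(apply_mem_Icc hw.1 i).1.lt_of_ne' hfrac.1, (apply_mem_Icc hw.1 i).2.lt_of_ne hfrac.2⟩
  have hint : ∀ j ∈ univ.erase i, w j = if w j = 1 then 1 else 0 := fun j hj => by
    have hj := apply_notMem_Ioo_of_mem_extremePoints hw (ne_of_mem_erase hj).symm hi
    obtain ⟨h0, h1⟩ := apply_mem_Icc hw.1 j
    split_ifs with hj1
    · exact hj1
    · by_contra hj0
      exact hj ⟨h0.lt_of_ne' hj0, h1.lt_of_ne hj1⟩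
  set k := #{j ∈ univ.erase i | w j = 1}
  have hsplit : ∑ j, w j = w i + k := by
    rw [← add_sum_erase _ _ (mem_univ i), sum_congr rfl hint, natCast_card_filter]
  have hk : (k : ℝ) + 1 ≤ n := by
    have : (k : ℝ) < n := by linarith [hw.1.2, hi.1]
    exact_mod_cast (show k + 1 ≤ n by exact_mod_cast this)
  set ε := min (w i) (1 - w i)
  have hε : 0 < ε := by simp only [ε, lt_min_iff, sub_pos]; exact hi
  have hv := eq_zero_of_mem_extremePoints hw (v := Pi.single i ε) (fun j => by
    rcases eq_or_ne j i with rfl | hji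
    · simp [abs_of_pos hε, ε]
    · simpa [hji] using apply_mem_Icc hw.1 j) (by
    simp only [sum_pi_single', mem_univ, if_true, abs_of_pos hε, hsplit]
    linarith [min_le_right (w i) (1 - w i)])
  simpa [hε.ne'] using congrFun hv i

end cappedSimplex

section cappedSimplex

variable {ι : Type*} [Fintype ι] {n : ℕ}

theorem convex_cappedSimplex : Convex ℝ (cappedSimplex ι n) :=
  (convex_Icc 0 1).inter (convex_halfSpace_le (f := fun w : ι → ℝ => ∑ i, w i)
    ⟨fun _ _ => sum_add_distrib, fun c w => by simp [mul_sum]⟩ _)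

theorem isCompact_cappedSimplex : IsCompact (cappedSimplex ι n) :=
  isCompact_Icc.of_isClosed_subset
    (isClosed_Icc.inter (isClosed_le (continuous_finsetSum _ fun i _ => continuous_apply i)
      continuous_const)) Set.inter_subset_left

theorem finite_extremePoints_cappedSimplex : ((cappedSimplex ι n).extremePoints ℝ).Finite :=
  (Set.Finite.pi fun _ => Set.toFinite {0, 1}).subset fun _ hw i _ =>
    cappedSimplex.apply_eq_zero_or_one_of_mem_extremePoints hw i

theorem convexHull_extremePoints_cappedSimplex :
    convexHull ℝ ((cappedSimplex ι n).extremePoints ℝ) = cappedSimplex ι n := by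
  rw [← (finite_extremePoints_cappedSimplex.isClosed_convexHull ℝ).closure_eq,
    closure_convexHull_extremePoints isCompact_cappedSimplex convex_cappedSimplex]

end cappedSimplex

theorem SignType.abs_coe_le_one {R : Type*} [Ring R] [LinearOrder R] [IsStrictOrderedRing R]
    (a : SignType) : |(a : R)| ≤ 1 := by
  cases a <;> simp

section Sparse

variable {ι : Type*} [Fintype ι]

theorem natCast_card_ne_zero_eq_sum {w : ι → ℝ} (hw : ∀ i, w i = 0 ∨ w i = 1) :
    (#{i | w i ≠ 0} : ℝ) = ∑ i, w i := by
  rw [natCast_card_filter]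
  exact sum_congr rfl fun i _ => by rcases hw i with h | h <;> simp [h]

theorem sum_sq_le_of_card_ne_zero_le {u : ι → ℝ} {n : ℕ} {c : ℝ} (hcard : #{j | u j ≠ 0} ≤ n)
    (hu : ∀ j, |u j| ≤ c) : ∑ j, u j ^ 2 ≤ n * c ^ 2 :=
  calc ∑ j, u j ^ 2 = ∑ j with u j ≠ 0, u j ^ 2 :=
        (sum_filter_of_ne fun j _ hj => by simpa using hj).symm
    _ ≤ #{j | u j ≠ 0} * c ^ 2 := by
        rw [← nsmul_eq_mul]
        exact sum_le_card_nsmul _ _ _ fun j _ =>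
          sq_abs (u j) ▸ pow_le_pow_left₀ (abs_nonneg _) (hu j) 2
    _ ≤ n * c ^ 2 := by gcongr

theorem mem_convexHull_sparse_of_abs_le_of_sum_abs_le {y : ι → ℝ} {c : ℝ} (n : ℕ)
    (hc : 0 ≤ c) (hinf : ∀ j, |y j| ≤ c) (hl1 : ∑ j, |y j| ≤ n * c) :
    y ∈ convexHull ℝ {u | #{j | u j ≠ 0} ≤ n ∧ (∀ j, u j ≠ 0 → y j ≠ 0) ∧ ∀ j, |u j| ≤ c} := by
  set f := LinearMap.mulLeft ℝ fun j => c * SignType.sign (y j)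
  have hfy : f (fun j => |y j| / c) = y := by
    funext j
    rcases hc.eq_or_lt with rfl | hc
    · simp [f, abs_nonpos_iff.1 (hinf j)]
    · simp only [f, LinearMap.mulLeft_apply, Pi.mul_apply]
      field_simp
      exact sign_mul_abs (y j)
  have hmem : (fun j => |y j| / c) ∈ cappedSimplex ι n :=
    ⟨⟨fun j => div_nonneg (abs_nonneg _) hc, fun j => div_le_one_of_le₀ (hinf j) hc⟩, by
      rw [← sum_div]; exact div_le_of_le_mul₀ hc (Nat.cast_nonneg n) hl1⟩
  rw [← convexHull_extremePoints_cappedSimplex] at hmem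
  have hy := Set.mem_image_of_mem f hmem
  rw [LinearMap.image_convexHull, hfy] at hy
  refine convexHull_mono ?_ hy
  rintro _ ⟨w, hw, rfl⟩
  have h01 := cappedSimplex.apply_eq_zero_or_one_of_mem_extremePoints hw
  simp only [f, LinearMap.mulLeft_apply]
  refine ⟨?_, fun j hj hyj => hj (by simp [hyj]), fun j => ?_⟩
  · have hcard : (#{j | w j ≠ 0} : ℝ) ≤ n := by
      rw [natCast_card_ne_zero_eq_sum h01]; exact hw.1.2
    refine (card_le_card fun j => ?_).trans (by exact_mod_cast hcard)
    simp only [mem_filter, mem_univ, true_and]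
    exact right_ne_zero_of_mul
  · rw [Pi.mul_apply, abs_mul, abs_mul, abs_of_nonneg hc]
    rcases h01 j with h | h <;>
      simp [h, hc, mul_le_of_le_one_right hc (SignType.abs_coe_le_one _)]

end Sparse

theorem tail_sparse_decomposition_general {N d : ℕ}
    (D : Matrix (Fin N) (Fin d) ℝ)
    (h : Fin N → ℝ) (s n : ℕ) (hn : 1 ≤ n)
    (r : ℝ) (hr : 0 ≤ r)
    (T0 : Finset (Fin d))
    (y : Fin d → ℝ) (hy : y = fun j => if j ∈ T0 then 0 else (Dᵀ *ᵥ h) j)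
    (hy1 : ∑ j, |y j| ≤ s * r)
    (hyinf : ∀ j, |y j| ≤ (s / n) * r) :
    ∃ (K : ℕ) (lam : Fin K → ℝ) (u : Fin K → Fin d → ℝ),
      (∀ i, 0 < lam i ∧ lam i ≤ 1) ∧
      (∑ i, lam i = 1) ∧
      (∀ i, ((univ.filter fun j => u i j ≠ 0).card ≤ n) ∧
            (∀ j, u i j ≠ 0 → j ∈ T0ᶜ) ∧
            (∀ j, |u i j| ≤ (s / n) * r)) ∧
      (y = ∑ i, lam i • u i) ∧
      (∑ i, lam i * ∑ j, (u i j) ^ 2 ≤ (s : ℝ) ^ 2 * r ^ 2 / n) := by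
  have hn0 : (n : ℝ) ≠ 0 := Nat.cast_ne_zero.2 (by omega)
  have hl1 : ∑ j, |y j| ≤ n * ((s / n) * r) := by rwa [← mul_assoc, mul_div_cancel₀ _ hn0]
  obtain ⟨K, lam, u, hlam, hsum, hu, hyu⟩ := exists_fin_pos_convex_combination_of_mem_convexHull
    (mem_convexHull_sparse_of_abs_le_of_sum_abs_le n (by positivity) hyinf hl1)
  refine ⟨K, lam, u, fun i => ⟨hlam i, ?_⟩, hsum, fun i => ⟨(hu i).1, fun j hj => ?_, (hu i).2.2⟩,
    hyu, ?_⟩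
  · exact hsum ▸ single_le_sum (fun k _ => (hlam k).le) (mem_univ i)
  · have hyj := (hu i).2.1 j hj
    rw [hy] at hyj
    simp only [ne_eq, ite_eq_left_iff, Classical.not_imp] at hyj
    exact mem_compl.2 hyj.1
  · calc ∑ i, lam i * ∑ j, u i j ^ 2 ≤ ∑ i, lam i * (n * ((s / n) * r) ^ 2) :=
          sum_le_sum fun i _ => mul_le_mul_of_nonneg_left
            (sum_sq_le_of_card_ne_zero_le (hu i).1 (hu i).2.2) (hlam i).le
      _ = (s : ℝ) ^ 2 * r ^ 2 / n := by
          rw [← sum_mul, hsum, one_mul]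
          field_simp

/-- Sparse decomposition (Lemma 2.2 applied to the tail `D^*_{T₀ᶜ} h`). -/
theorem tail_sparse_decomposition {N d : ℕ}
    (D : Matrix (Fin N) (Fin d) ℝ) (hD : D * Dᵀ = 1)
    (h : Fin N → ℝ) (s n : ℕ) (hn : 1 ≤ n) (hns : n ≤ s)
    (r : ℝ) (hr : 0 ≤ r)
    (T0 : Finset (Fin d)) (hT0card : T0.card = s)
    (hT0max : ∀ i ∈ T0, ∀ j ∈ T0ᶜ, |(Dᵀ *ᵥ h) j| ≤ |(Dᵀ *ᵥ h) i|)
    (y : Fin d → ℝ) (hy : y = fun j => if j ∈ T0 then 0 else (Dᵀ *ᵥ h) j)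
    (hy1 : ∑ j, |y j| ≤ s * r)
    (hyinf : ∀ j, |y j| ≤ (s / n) * r) :
    ∃ (K : ℕ) (lam : Fin K → ℝ) (u : Fin K → Fin d → ℝ),
      (∀ i, 0 < lam i ∧ lam i ≤ 1) ∧
      (∑ i, lam i = 1) ∧
      (∀ i, ((univ.filter fun j => u i j ≠ 0).card ≤ n) ∧
            (∀ j, u i j ≠ 0 → j ∈ T0ᶜ) ∧
            (∀ j, |u i j| ≤ (s / n) * r)) ∧
      (y = ∑ i, lam i • u i) ∧
      (∑ i, lam i * ∑ j, (u i j) ^ 2 ≤ (s : ℝ) ^ 2 * r ^ 2 / n) :=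
  tail_sparse_decomposition_general D h s n hn r hr T0 y hy hy1 hyinf
end
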